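/- For the fragment of intuitionistic linear logic with Mix restricted to rules Ax, Mix, NegL, ⊗L, ⊗R, ⊸L: if Γ ⊢ Z is derivable where Z is a tensor product of positive atoms or empty, then there exists a derivation of Γ ⊢ Z in which every sequent has as its right-hand side a (possibly empty) tensor product of positive atoms. -/
import Mathlib


/-- Formulae: positive atoms `a`, negative atoms `a⊥`, tensor, and linear
implication `⊸`. -/
inductive ILLForm where
  | pos : ℕ → ILLForm
  | neg : ℕ → ILLForm
  | tens : ILLForm → ILLForm → ILLForm
  | limp : ILLForm → ILLForm → ILLForm
deriving DecidableEq

/-- The ILL^mix fragment with rules Ax, Mix, NegL, ⊗L, ⊗R, ⊸L.  The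
right-hand side is `none` (empty) or a single formula. -/
inductive Der : Multiset ILLForm → Option ILLForm → Prop where
  | ax (A) : Der {A} (some A)
  | mix {Γ Γ' γ} : Der Γ none → Der Γ' γ → Der (Γ + Γ') γ
  | negL {Γ n} : Der Γ (some (.pos n)) → Der ((ILLForm.neg n) ::ₘ Γ) none
  | tensL {Γ A B γ} : Der (A ::ₘ B ::ₘ Γ) γ → Der ((ILLForm.tens A B) ::ₘ Γ) γ
  | tensR {Γ Γ' A B} : Der Γ (some A) → Der Γ' (some B) →
      Der (Γ + Γ') (some (ILLForm.tens A B))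
  | limpL {Γ Γ' A B γ} : Der Γ (some A) → Der (B ::ₘ Γ') γ →
      Der ((ILLForm.limp A B) ::ₘ (Γ + Γ')) γ

/-- Tensor products of positive atoms. -/
inductive PosTensor : ILLForm → Prop
  | pos (n : ℕ) : PosTensor (.pos n)
  | tens {A B} : PosTensor A → PosTensor B → PosTensor (.tens A B)

/-- An honoured right-hand side: empty, or a tensor product of positive atoms. -/
def HonRHS : Option ILLForm → Prop
  | none => True
  | some A => PosTensor A

/-- Tensor products of literals. -/
inductive LitTensor : ILLForm → Prop
  | pos (n : ℕ) : LitTensor (.pos n)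
  | neg (n : ℕ) : LitTensor (.neg n)
  | tens {A B} : LitTensor A → LitTensor B → LitTensor (.tens A B)

/-- Horn clauses: tensor products of literals, or Horn implications with a
positive premise and a literal-tensor conclusion. -/
inductive HornClause : ILLForm → Prop
  | lit {A} : LitTensor A → HornClause A
  | imp {A B} : PosTensor A → LitTensor B → HornClause (.limp A B)

/-- Horn formulae: tensor products of Horn clauses. -/
inductive HornForm : ILLForm → Prop
  | clause {A} : HornClause A → HornForm A
  | tens {A B} : HornForm A → HornForm B → HornForm (.tens A B)

/-- `DerH Γ γ` : derivability as in `Der`, but every sequent occurring in the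
derivation is honoured (the only rule that can introduce an arbitrary
right-hand side, Ax, is restricted to honoured ones; all other rules
propagate honouredness). -/
inductive DerH : Multiset ILLForm → Option ILLForm → Prop where
  | ax (A) : HonRHS (some A) → DerH {A} (some A)
  | mix {Γ Γ' γ} : DerH Γ none → DerH Γ' γ → DerH (Γ + Γ') γ
  | negL {Γ n} : DerH Γ (some (.pos n)) → DerH ((ILLForm.neg n) ::ₘ Γ) none
  | tensL {Γ A B γ} : DerH (A ::ₘ B ::ₘ Γ) γ → DerH ((ILLForm.tens A B) ::ₘ Γ) γ
  | tensR {Γ Γ' A B} : DerH Γ (some A) → DerH Γ' (some B) →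
      DerH (Γ + Γ') (some (ILLForm.tens A B))
  | limpL {Γ Γ' A B γ} : DerH Γ (some A) → DerH (B ::ₘ Γ') γ →
      DerH ((ILLForm.limp A B) ::ₘ (Γ + Γ')) γ

lemma posTensor_litTensor {A : ILLForm} (h : PosTensor A) : LitTensor A := by
  induction h with
  | pos n => exact LitTensor.pos n
  | tens _ _ ihA ihB => exact LitTensor.tens ihA ihB

lemma litTensor_tens {A B : ILLForm} (h : LitTensor (.tens A B)) :
    LitTensor A ∧ LitTensor B := by cases h with | tens hA hB => exact ⟨hA, hB⟩

lemma hornForm_tens {A B : ILLForm} (h : HornForm (.tens A B)) :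
    HornForm A ∧ HornForm B := by
  cases h with
  | clause hc =>
    cases hc with
    | lit hl =>
      obtain ⟨hA, hB⟩ := litTensor_tens hl
      exact ⟨HornForm.clause (HornClause.lit hA), HornForm.clause (HornClause.lit hB)⟩
  | tens hA hB => exact ⟨hA, hB⟩

lemma hornForm_limp {A B : ILLForm} (h : HornForm (.limp A B)) :
    PosTensor A ∧ HornForm B := by
  cases h with
  | clause hc =>
    cases hc with
    | lit hl => cases hl
    | imp hA hB => exact ⟨hA, HornForm.clause (HornClause.lit hB)⟩

lemma der_honoured : ∀ {Γ : Multiset ILLForm} {Z : Option ILLForm},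
    Der Γ Z → (∀ A ∈ Γ, HornForm A) → HonRHS Z → DerH Γ Z := by
  intro Γ Z h
  induction h with
  | ax A => intro hΓ hZ; exact DerH.ax A hZ
  | mix _ _ ih₁ ih₂ =>
    intro hΓ hZ
    exact DerH.mix
      (ih₁ (fun A hA => hΓ A (Multiset.mem_add.2 (Or.inl hA))) trivial)
      (ih₂ (fun A hA => hΓ A (Multiset.mem_add.2 (Or.inr hA))) hZ)
  | negL _ ih =>
    intro hΓ _
    exact DerH.negL (ih (fun A hA => hΓ A (Multiset.mem_cons_of_mem hA))
      (PosTensor.pos _))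
  | @tensL Γ' A B γ _ ih =>
    intro hΓ hZ
    have ht := hornForm_tens (hΓ _ (Multiset.mem_cons_self _ _))
    refine DerH.tensL (ih ?_ hZ)
    intro C hC
    rcases Multiset.mem_cons.1 hC with rfl | hC
    · exact ht.1
    rcases Multiset.mem_cons.1 hC with rfl | hC
    · exact ht.2
    · exact hΓ C (Multiset.mem_cons_of_mem hC)
  | tensR _ _ ih₁ ih₂ =>
    intro hΓ hZ
    cases hZ with
    | tens hA hB =>
      exact DerH.tensR
        (ih₁ (fun C hC => hΓ C (Multiset.mem_add.2 (Or.inl hC))) hA)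
        (ih₂ (fun C hC => hΓ C (Multiset.mem_add.2 (Or.inr hC))) hB)
  | @limpL Γ₁ Γ₂ A B γ _ _ ih₁ ih₂ =>
    intro hΓ hZ
    have hl := hornForm_limp (hΓ _ (Multiset.mem_cons_self _ _))
    refine DerH.limpL
      (ih₁ (fun C hC => hΓ C (Multiset.mem_cons_of_mem (Multiset.mem_add.2 (Or.inl hC)))) hl.1)
      (ih₂ ?_ hZ)
    intro C hC
    rcases Multiset.mem_cons.1 hC with rfl | hC
    · exact hl.2
    · exact hΓ C (Multiset.mem_cons_of_mem (Multiset.mem_add.2 (Or.inr hC)))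

/-- If `Γ ⊢ Z` is derivable in the Horn fragment of ILL^mix (rules Ax, Mix,
NegL, ⊗L, ⊗R, ⊸L) with `Z` a positive tensor product or empty, then there is a
derivation of `Γ ⊢ Z` in which every sequent has a (possibly empty) positive
tensor product as right-hand side, i.e. every sequent is honoured. -/
theorem honoured_derivation (Γ : Multiset ILLForm) (Z : Option ILLForm)
    (hΓ : ∀ A ∈ Γ, HornForm A) (hZ : HonRHS Z) (h : Der Γ Z) :
    DerH Γ Z :=
  der_honoured h hΓ hZ
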